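/- For n ≥ 1, 1 < p < ∞, and exponents α, β with −n < β ≤ α < n(p−1) (or more generally −n < α, β < n(p−1)), the weight w_{α,β}(x) = |x|^α for |x| ≤ 1 and |x|^β for |x| > 1 belongs to the Muckenhoupt class A_p(ℝⁿ). -/

import Mathlib

/-!
A power `‖y‖ ^ γ` with `γ > -n` has average over `B(x, r)` at most `C (‖x‖ + r) ^ γ`: this is
pointwise when `γ ≥ 0` or when the ball stays away from the origin (`2r ≤ ‖x‖`), and otherwise
follows from the exact polar-coordinate integral over `B(0, 3r) ⊇ B(x, r)`.
Since `β ≤ α`, the weight is `min (‖y‖ ^ α) (‖y‖ ^ β)` off the origin and its dual power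
`w ^ (-1/(p-1))` is at most `‖y‖ ^ (-α/(p-1)) + ‖y‖ ^ (-β/(p-1))`, all exponents exceeding `-n`
because `-n < β ≤ α < n(p-1)`. With `m = min ((‖x‖ + r) ^ α) ((‖x‖ + r) ^ β)` the two averages
are `≲ m` and `≲ m ^ (-1/(p-1))`, so the `A_p` product is bounded uniformly in the ball.
-/

open MeasureTheory

/-- The glued power weight `w_{α,β}`. -/
noncomputable def wab (n : ℕ) (α β : ℝ) (x : EuclideanSpace ℝ (Fin n)) : ℝ :=
  if ‖x‖ ≤ 1 then ‖x‖ ^ α else ‖x‖ ^ β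

open Metric Set Module

theorem setIntegral_le_of_le_const_real {X : Type*} [MeasurableSpace X] {μ : Measure X}
    {s : Set X} {f : X → ℝ} {c : ℝ} (hs : MeasurableSet s) (hμs : μ s ≠ ⊤)
    (hf : ∀ x ∈ s, f x ≤ c) (hfint : IntegrableOn f s μ) :
    ∫ x in s, f x ∂μ ≤ c * μ.real s := by
  calc ∫ x in s, f x ∂μ ≤ ∫ _ in s, c ∂μ :=
        setIntegral_mono_on hfint (integrableOn_const hμs) hs hf
    _ = c * μ.real s := by rw [setIntegral_const, smul_eq_mul, mul_comm]

theorem div_mul_div_rpow_le_of_le_mul {I J V A B m q : ℝ} (hV : 0 < V) (hm : 0 < m)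
    (hq : 0 < q) (hI₀ : 0 ≤ I) (hI : I ≤ A * m * V) (hJ₀ : 0 ≤ J)
    (hJ : J ≤ B * m ^ (-1 / q) * V) :
    I / V * (J / V) ^ q ≤ A * B ^ q := by
  have hIV : I / V ≤ A * m := (div_le_iff₀ hV).2 hI
  have hJV : J / V ≤ B * m ^ (-1 / q) := (div_le_iff₀ hV).2 hJ
  have hB : 0 ≤ B := nonneg_of_mul_nonneg_left ((div_nonneg hJ₀ hV.le).trans hJV) (by positivity)
  calc I / V * (J / V) ^ q ≤ A * m * (B * m ^ (-1 / q)) ^ q := by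
        gcongr
        exact (div_nonneg hI₀ hV.le).trans hIV
    _ = A * B ^ q := by
        rw [Real.mul_rpow hB (by positivity), ← Real.rpow_mul hm.le,
          div_mul_cancel₀ _ hq.ne', Real.rpow_neg_one]
        field_simp

section PowerWeights

variable {E : Type*} [NormedAddCommGroup E] [NormedSpace ℝ E] [FiniteDimensional ℝ E]
  [MeasurableSpace E] [BorelSpace E] [Nontrivial E] (μ : Measure E) [μ.IsAddHaarMeasure]

theorem integrableOn_norm_rpow_ball_zero {γ : ℝ} (hγ : -(finrank ℝ E : ℝ) < γ) (R : ℝ) :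
    IntegrableOn (fun x : E => ‖x‖ ^ γ) (ball 0 R) μ := by
  rw [integrableOn_fun_norm_addHaar μ (f := fun t => t ^ γ)]
  have h : IntegrableOn (fun t : ℝ => t ^ ((finrank ℝ E : ℝ) - 1 + γ)) (Ioo 0 R) :=
    (intervalIntegral.intervalIntegrable_rpow' (by linarith) (a := 0) (b := R)).1.mono_set
      Ioo_subset_Ioc_self
  refine h.congr_fun (fun t ht => ?_) measurableSet_Ioo
  rw [smul_eq_mul, ← Real.rpow_natCast, ← Real.rpow_add ht.1, Nat.cast_sub finrank_pos,
    Nat.cast_one]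

theorem integrableOn_norm_rpow_ball {γ : ℝ} (hγ : -(finrank ℝ E : ℝ) < γ) (x : E) (r : ℝ) :
    IntegrableOn (fun y : E => ‖y‖ ^ γ) (ball x r) μ :=
  (integrableOn_norm_rpow_ball_zero μ hγ (r + ‖x‖)).mono_set
    (ball_subset_ball' (by rw [dist_zero_right]))

theorem integral_norm_rpow_ball_zero {γ : ℝ} (hγ : -(finrank ℝ E : ℝ) < γ) {R : ℝ} (hR : 0 ≤ R) :
    ∫ x in ball (0 : E) R, ‖x‖ ^ γ ∂μ =
      finrank ℝ E / (finrank ℝ E + γ) * R ^ γ * μ.real (ball 0 R) := by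
  set d : ℝ := (finrank ℝ E : ℝ)
  have hdγ : 0 < d + γ := by linarith
  have h_indicator : (ball (0 : E) R).indicator (fun x => ‖x‖ ^ γ) =
      fun x => (Iio R).indicator (fun t => t ^ γ) ‖x‖ := by
    ext x
    simp only [indicator, mem_ball_zero_iff, mem_Iio]
  have h_radial : ∫ t in Ioi (0 : ℝ), t ^ (finrank ℝ E - 1) • (Iio R).indicator (· ^ γ) t =
      ∫ t in (0)..R, t ^ (d - 1 + γ) := by
    rw [intervalIntegral.integral_of_le hR, ← setIntegral_congr_set Ioo_ae_eq_Ioc,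
      ← integral_indicator measurableSet_Ioi, ← integral_indicator measurableSet_Ioo]
    congr 1
    ext t
    by_cases ht : 0 < t <;> by_cases htR : t < R <;>
      simp [indicator, ht, htR, ← Real.rpow_natCast, ← Real.rpow_add, Nat.cast_sub finrank_pos, d]
  rw [← integral_indicator measurableSet_ball, h_indicator, integral_fun_norm_addHaar μ,
    h_radial, integral_rpow (Or.inl (by linarith)), measureReal_def μ (ball 0 R),
    Measure.addHaar_ball μ 0 hR, ENNReal.toReal_mul, ENNReal.toReal_ofReal (by positivity),
    ← measureReal_def, show d - 1 + γ + 1 = d + γ by ring, Real.zero_rpow hdγ.ne',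
    Real.rpow_add' hR hdγ.ne', Real.rpow_natCast, nsmul_eq_mul, smul_eq_mul]
  field_simp
  ring

theorem setIntegral_norm_rpow_ball_le_of_norm_le {γ : ℝ} (hγ : -(finrank ℝ E : ℝ) < γ)
    (hγ0 : γ ≤ 0) {x : E} {r : ℝ} (hr : 0 < r) (hx : ‖x‖ ≤ 2 * r) :
    ∫ y in ball x r, ‖y‖ ^ γ ∂μ ≤
      3 ^ finrank ℝ E * (finrank ℝ E / (finrank ℝ E + γ)) * (‖x‖ + r) ^ γ * μ.real (ball x r) := by
  have h_subset : ball x r ⊆ ball 0 (3 * r) :=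
    ball_subset_ball' (by rw [dist_zero_right]; linarith)
  have h_measure : μ.real (ball 0 (3 * r)) = 3 ^ finrank ℝ E * μ.real (ball x r) := by
    rw [measureReal_def, Measure.addHaar_ball_mul μ 0 (by norm_num : (0:ℝ) ≤ 3),
      ← Measure.addHaar_ball_center μ x, ENNReal.toReal_mul, ENNReal.toReal_ofReal (by positivity),
      ← measureReal_def]
  have h_rpow : (3 * r) ^ γ ≤ (‖x‖ + r) ^ γ :=
    Real.rpow_le_rpow_of_nonpos (by positivity) (by linarith) hγ0
  have hdγ : 0 ≤ (finrank ℝ E : ℝ) / (finrank ℝ E + γ) := div_nonneg (by positivity) (by linarith)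
  calc ∫ y in ball x r, ‖y‖ ^ γ ∂μ ≤ ∫ y in ball 0 (3 * r), ‖y‖ ^ γ ∂μ :=
        setIntegral_mono_set (integrableOn_norm_rpow_ball_zero μ hγ _)
          (.of_forall fun y => by positivity) h_subset.eventuallyLE
    _ = 3 ^ finrank ℝ E * (finrank ℝ E / (finrank ℝ E + γ)) * (3 * r) ^ γ *
          μ.real (ball x r) := by
        rw [integral_norm_rpow_ball_zero μ hγ (by positivity), h_measure]
        ring
    _ ≤ _ := by gcongr

theorem setIntegral_norm_rpow_ball_le_of_le_norm {γ : ℝ} (hγ : -(finrank ℝ E : ℝ) < γ)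
    (hγ0 : γ ≤ 0) {x : E} {r : ℝ} (hr : 0 < r) (hx : 2 * r ≤ ‖x‖) :
    ∫ y in ball x r, ‖y‖ ^ γ ∂μ ≤ 3 ^ (-γ) * (‖x‖ + r) ^ γ * μ.real (ball x r) := by
  have h_pointwise : ∀ y ∈ ball x r, ‖y‖ ^ γ ≤ 3 ^ (-γ) * (‖x‖ + r) ^ γ := by
    intro y hy
    have h_far : (‖x‖ + r) / 3 ≤ ‖y‖ := by
      have := norm_sub_norm_le x y
      rw [mem_ball, dist_comm, dist_eq_norm] at hy
      linarith
    calc ‖y‖ ^ γ ≤ ((‖x‖ + r) / 3) ^ γ := Real.rpow_le_rpow_of_nonpos (by positivity) h_far hγ0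
      _ = 3 ^ (-γ) * (‖x‖ + r) ^ γ := by
        rw [Real.div_rpow (by positivity) (by norm_num), Real.rpow_neg (by norm_num)]
        ring
  exact setIntegral_le_of_le_const_real measurableSet_ball measure_ball_lt_top.ne h_pointwise
    (integrableOn_norm_rpow_ball μ hγ x r)

theorem exists_setIntegral_norm_rpow_ball_le {γ : ℝ} (hγ : -(finrank ℝ E : ℝ) < γ) :
    ∃ C : ℝ, 0 ≤ C ∧ ∀ (x : E) (r : ℝ), 0 < r →
      ∫ y in ball x r, ‖y‖ ^ γ ∂μ ≤ C * (‖x‖ + r) ^ γ * μ.real (ball x r) := by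
  rcases le_total 0 γ with hγ0 | hγ0
  · refine ⟨1, zero_le_one, fun x r hr => ?_⟩
    have h_pointwise : ∀ y ∈ ball x r, ‖y‖ ^ γ ≤ 1 * (‖x‖ + r) ^ γ := fun y hy => by
      rw [one_mul]
      refine Real.rpow_le_rpow (norm_nonneg y) ?_ hγ0
      have := norm_le_norm_add_norm_sub' y x
      rw [mem_ball, dist_eq_norm] at hy
      linarith
    exact setIntegral_le_of_le_const_real measurableSet_ball measure_ball_lt_top.ne h_pointwise
      (integrableOn_norm_rpow_ball μ hγ x r)
  · refine ⟨max (3 ^ finrank ℝ E * (finrank ℝ E / (finrank ℝ E + γ))) (3 ^ (-γ)),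
      le_max_of_le_right (by positivity), fun x r hr => ?_⟩
    rcases le_total ‖x‖ (2 * r) with hx | hx
    · exact (setIntegral_norm_rpow_ball_le_of_norm_le μ hγ hγ0 hr hx).trans
        (by gcongr; exact le_max_left _ _)
    · exact (setIntegral_norm_rpow_ball_le_of_le_norm μ hγ hγ0 hr hx).trans
        (by gcongr; exact le_max_right _ _)

end PowerWeights

section GluedPowerWeight

variable {n : ℕ} {α β : ℝ}

theorem wab_nonneg (y : EuclideanSpace ℝ (Fin n)) : 0 ≤ wab n α β y := by
  unfold wab; split_ifs <;> positivity

theorem measurable_wab : Measurable (wab n α β) :=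
  Measurable.ite (measurableSet_le measurable_norm measurable_const)
    (measurable_norm.pow_const α) (measurable_norm.pow_const β)

theorem wab_le_norm_rpow_left (hβα : β ≤ α) (y : EuclideanSpace ℝ (Fin n)) :
    wab n α β y ≤ ‖y‖ ^ α := by
  unfold wab
  split_ifs with hy
  · exact le_rfl
  · exact Real.rpow_le_rpow_of_exponent_le (not_le.1 hy).le hβα

theorem wab_le_norm_rpow_right (hβα : β ≤ α) {y : EuclideanSpace ℝ (Fin n)} (hy₀ : y ≠ 0) :
    wab n α β y ≤ ‖y‖ ^ β := by
  unfold wab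
  split_ifs with hy
  · exact Real.rpow_le_rpow_of_exponent_ge (norm_pos_iff.2 hy₀) hy hβα
  · exact le_rfl

theorem wab_rpow_le (σ : ℝ) (y : EuclideanSpace ℝ (Fin n)) :
    wab n α β y ^ σ ≤ ‖y‖ ^ (α * σ) + ‖y‖ ^ (β * σ) := by
  rw [Real.rpow_mul (norm_nonneg y), Real.rpow_mul (norm_nonneg y)]
  unfold wab
  split_ifs
  · exact le_add_of_nonneg_right (by positivity)
  · exact le_add_of_nonneg_left (by positivity)

variable [NeZero n]

theorem integrableOn_wab_ball (hβα : β ≤ α) (hα : -(n : ℝ) < α)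
    (x : EuclideanSpace ℝ (Fin n)) (r : ℝ) :
    IntegrableOn (wab n α β) (ball x r) := by
  rw [← finrank_euclideanSpace_fin (𝕜 := ℝ) (n := n)] at hα
  refine (integrableOn_norm_rpow_ball volume hα x r).mono' measurable_wab.aestronglyMeasurable
    (.of_forall fun y => ?_)
  rw [Real.norm_of_nonneg (wab_nonneg y)]
  exact wab_le_norm_rpow_left hβα y

theorem integrableOn_wab_rpow_ball {σ : ℝ} (hα : -(n : ℝ) < α * σ) (hβ : -(n : ℝ) < β * σ)
    (x : EuclideanSpace ℝ (Fin n)) (r : ℝ) :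
    IntegrableOn (fun y => wab n α β y ^ σ) (ball x r) := by
  rw [← finrank_euclideanSpace_fin (𝕜 := ℝ) (n := n)] at hα hβ
  refine ((integrableOn_norm_rpow_ball volume hα x r).add
    (integrableOn_norm_rpow_ball volume hβ x r)).mono'
    (measurable_wab.pow_const σ).aestronglyMeasurable (.of_forall fun y => ?_)
  rw [Real.norm_of_nonneg (Real.rpow_nonneg (wab_nonneg y) σ)]
  exact wab_rpow_le σ y

theorem exists_setIntegral_wab_le (hβα : β ≤ α) (hβ : -(n : ℝ) < β) :
    ∃ A : ℝ, ∀ (x : EuclideanSpace ℝ (Fin n)) (r : ℝ), 0 < r →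
      ∫ y in ball x r, wab n α β y ≤
        A * min ((‖x‖ + r) ^ α) ((‖x‖ + r) ^ β) * volume.real (ball x r) := by
  have hα : -(n : ℝ) < α := hβ.trans_le hβα
  have hα' := hα
  rw [← finrank_euclideanSpace_fin (𝕜 := ℝ) (n := n)] at hα' hβ
  obtain ⟨Cα, -, hCα⟩ := exists_setIntegral_norm_rpow_ball_le volume hα'
  obtain ⟨Cβ, -, hCβ⟩ := exists_setIntegral_norm_rpow_ball_le volume hβ
  refine ⟨max Cα Cβ, fun x r hr => ?_⟩
  have h_left := (setIntegral_mono_on (integrableOn_wab_ball hβα hα x r)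
    (integrableOn_norm_rpow_ball volume hα' x r) measurableSet_ball
    fun y _ => wab_le_norm_rpow_left hβα y).trans (hCα x r hr)
  -- `wab ≤ ‖·‖ ^ β` fails at the origin when `β < α = 0`
  have h_right := (integral_mono_ae (integrableOn_wab_ball hβα hα x r)
    (integrableOn_norm_rpow_ball volume hβ x r)
    (ae_restrict_of_ae <| (volume.ae_ne 0).mono
      fun y hy => wab_le_norm_rpow_right hβα hy)).trans (hCβ x r hr)
  rcases min_cases ((‖x‖ + r) ^ α) ((‖x‖ + r) ^ β) with ⟨hm, -⟩ | ⟨hm, -⟩ <;> rw [hm]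
  · exact h_left.trans (by gcongr; exact le_max_left _ _)
  · exact h_right.trans (by gcongr; exact le_max_right _ _)

theorem exists_setIntegral_wab_rpow_le {σ : ℝ} (hσ : σ ≤ 0) (hα : -(n : ℝ) < α * σ)
    (hβ : -(n : ℝ) < β * σ) :
    ∃ B : ℝ, ∀ (x : EuclideanSpace ℝ (Fin n)) (r : ℝ), 0 < r →
      ∫ y in ball x r, wab n α β y ^ σ ≤
        B * min ((‖x‖ + r) ^ α) ((‖x‖ + r) ^ β) ^ σ * volume.real (ball x r) := by
  have h_integrable := integrableOn_wab_rpow_ball hα hβ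
  rw [← finrank_euclideanSpace_fin (𝕜 := ℝ) (n := n)] at hα hβ
  obtain ⟨Cα, hCα₀, hCα⟩ := exists_setIntegral_norm_rpow_ball_le volume hα
  obtain ⟨Cβ, hCβ₀, hCβ⟩ := exists_setIntegral_norm_rpow_ball_le volume hβ
  refine ⟨Cα + Cβ, fun x r hr => ?_⟩
  set s := ‖x‖ + r
  have hs : 0 < s := by positivity
  have hm : 0 < min (s ^ α) (s ^ β) := lt_min (by positivity) (by positivity)
  have hIα := integrableOn_norm_rpow_ball volume hα x r
  have hIβ := integrableOn_norm_rpow_ball volume hβ x r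
  calc ∫ y in ball x r, wab n α β y ^ σ
      ≤ ∫ y in ball x r, (‖y‖ ^ (α * σ) + ‖y‖ ^ (β * σ)) :=
        setIntegral_mono_on (h_integrable x r) (hIα.add hIβ) measurableSet_ball
          fun y _ => wab_rpow_le σ y
    _ = (∫ y in ball x r, ‖y‖ ^ (α * σ)) + ∫ y in ball x r, ‖y‖ ^ (β * σ) := integral_add hIα hIβ
    _ ≤ Cα * s ^ (α * σ) * volume.real (ball x r) + Cβ * s ^ (β * σ) * volume.real (ball x r) :=
        add_le_add (hCα x r hr) (hCβ x r hr)
    _ ≤ _ := by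
        rw [Real.rpow_mul hs.le, Real.rpow_mul hs.le, add_mul, add_mul]
        gcongr _ * ?_ * _ + _ * ?_ * _
        · exact Real.rpow_le_rpow_of_nonpos hm (min_le_left _ _) hσ
        · exact Real.rpow_le_rpow_of_nonpos hm (min_le_right _ _) hσ

end GluedPowerWeight

theorem stmt10_general (n : ℕ) (p α β : ℝ) (hp : 1 < p)
    (hβ : -(n : ℝ) < β) (hβα : β ≤ α) (hα : α < (n : ℝ) * (p - 1)) :
    ∃ M : ℝ, ∀ (x : EuclideanSpace ℝ (Fin n)) (r : ℝ), 0 < r →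
      ((∫ y in Metric.ball x r, wab n α β y) / (volume (Metric.ball x r)).toReal) *
        (((∫ y in Metric.ball x r, (wab n α β y) ^ (-(1:ℝ) / (p - 1))) /
          (volume (Metric.ball x r)).toReal) ^ (p - 1)) ≤ M := by
  have hp₁ : 0 < p - 1 := sub_pos.2 hp
  have : NeZero n := ⟨by rintro rfl; simp only [CharP.cast_eq_zero, zero_mul] at hβ hα; linarith⟩
  have h_dual_exponent : ∀ γ ≤ α, -(n : ℝ) < γ * (-1 / (p - 1)) := fun γ hγ => by
    rw [mul_div_assoc', mul_neg_one, neg_div, neg_lt_neg_iff, div_lt_iff₀ hp₁]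
    linarith
  obtain ⟨A, hA⟩ := exists_setIntegral_wab_le hβα hβ
  obtain ⟨B, hB⟩ := exists_setIntegral_wab_rpow_le (div_nonpos_of_nonpos_of_nonneg
    (by norm_num) hp₁.le) (h_dual_exponent α le_rfl) (h_dual_exponent β hβα)
  refine ⟨A * B ^ (p - 1), fun x r hr => div_mul_div_rpow_le_of_le_mul ?_ ?_ hp₁
    (setIntegral_nonneg measurableSet_ball fun y _ => wab_nonneg y) (hA x r hr)
    (setIntegral_nonneg measurableSet_ball fun y _ => Real.rpow_nonneg (wab_nonneg y) _)
    (hB x r hr)⟩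
  · exact ENNReal.toReal_pos (measure_ball_pos volume x hr).ne' measure_ball_lt_top.ne
  · exact lt_min (by positivity) (by positivity)

/-- For `1 < p` and `-n < β ≤ α < n(p-1)`, the weight `w_{α,β}` is a Muckenhoupt `A_p`
weight on `ℝⁿ`. -/
theorem stmt10 (n : ℕ) (hn : 1 ≤ n) (p α β : ℝ) (hp : 1 < p)
    (hβ : -(n : ℝ) < β) (hβα : β ≤ α) (hα : α < (n : ℝ) * (p - 1)) :
    ∃ M : ℝ, ∀ (x : EuclideanSpace ℝ (Fin n)) (r : ℝ), 0 < r →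
      ((∫ y in Metric.ball x r, wab n α β y) / (volume (Metric.ball x r)).toReal) *
        (((∫ y in Metric.ball x r, (wab n α β y) ^ (-(1:ℝ) / (p - 1))) /
          (volume (Metric.ball x r)).toReal) ^ (p - 1)) ≤ M :=
  stmt10_general n p α β hp hβ hβα hα
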